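/- arXiv:2401.08024 — 2 statements merged into one kernel-verified Lean document; each statement's English description precedes it below -/
import Mathlib

section
/- For the general AdaBB iteration and every k ≥ 1: (1) the identity ‖x^{k+1} − x^k‖² = (α_k²/λ_k − α_k²/α_{k−1})·⟨∇f(x^k) − ∇f(x^{k−1}), x^k − x^{k−1}⟩ + (α_k²/α_{k−1})·⟨∇f(x^k), x^{k−1} − x^k⟩ holds; and (2) the bound ‖x^{k+1} − x^k‖² ≤ M_k‖x^k − x^{k−1}‖² + P_k·(f(x^{k−1}) − f(x^k)) holds. -/
open scoped RealInnerProductSpace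
open Finset Filter

noncomputable section

/-- The general AdaBB iteration (Algorithm 2 of the paper) for a convex differentiable
function `f : ℝⁿ → ℝ` that attains its minimum.  `f'` is the gradient of `f`,
`x` the iterates, `α` the stepsizes, `θ` the stepsize ratios and `lam` the short BB stepsizes. -/
structure AdaBB (n : ℕ) where
  f : EuclideanSpace ℝ (Fin n) → ℝ
  f' : EuclideanSpace ℝ (Fin n) → EuclideanSpace ℝ (Fin n)
  x : ℕ → EuclideanSpace ℝ (Fin n)
  α : ℕ → ℝ
  θ : ℕ → ℝ
  lam : ℕ → ℝ
  hconv : ConvexOn ℝ Set.univ f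
  hgrad : ∀ y, HasGradientAt f (f' y) y
  hmin : ∃ z, ∀ y, f z ≤ f y
  hα0 : 0 < α 0
  hθ0 : 0 ≤ θ 0
  hx1 : x 1 = x 0 - α 0 • f' (x 0)
  hne : ∀ k, f' (x (k + 1)) ≠ f' (x k)
  hlam : ∀ k, lam (k + 1) =
    ⟪f' (x (k + 1)) - f' (x k), x (k + 1) - x k⟫ / ‖f' (x (k + 1)) - f' (x k)‖ ^ 2
  hlampos : ∀ k, 0 < lam (k + 1)
  hcase1 : ∀ k, α k ≤ lam (k + 1) →
    α (k + 1) = Real.sqrt (1 + θ k) * α k ∧ θ (k + 1) = α (k + 1) / α k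
  hcase2 : ∀ k, α k / 2 < lam (k + 1) → lam (k + 1) < α k →
    (α (k + 1) = min (Real.sqrt (lam (k + 1) / (2 * (α k - lam (k + 1)))))
        (Real.sqrt ((1 + θ k) * lam (k + 1) / (2 * lam (k + 1) - α k))) * α k ∨
      α (k + 1) = lam (k + 1)) ∧
    θ (k + 1) = 2 * α (k + 1) / α k - α (k + 1) / lam (k + 1)
  hcase3 : ∀ k, lam (k + 1) ≤ α k / 2 →
    (α (k + 1) = Real.sqrt (α k / (2 * (α k - lam (k + 1)))) * lam (k + 1) ∨
      α (k + 1) = lam (k + 1) / Real.sqrt 2) ∧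
    θ (k + 1) = α (k + 1) / α k
  hstep : ∀ k, x (k + 2) = x (k + 1) - α (k + 1) • f' (x (k + 1))

namespace AdaBB

variable {n : ℕ}

/-- `M_k` (for `k ≥ 1`). -/
def M (S : AdaBB n) (k : ℕ) : ℝ :=
  if S.α (k - 1) ≤ S.lam k then 0
  else if S.α (k - 1) / 2 < S.lam k then
    S.α k ^ 2 / (S.lam k * S.α (k - 1)) - S.α k ^ 2 / S.α (k - 1) ^ 2
  else S.α k ^ 2 / S.lam k ^ 2 - S.α k ^ 2 / (S.α (k - 1) * S.lam k)

/-- `P_k` for `k ≥ 1`. -/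
def Paux (S : AdaBB n) (k : ℕ) : ℝ :=
  if S.α (k - 1) ≤ S.lam k then S.α k ^ 2 / S.α (k - 1)
  else if S.α (k - 1) / 2 < S.lam k then
    2 * S.α k ^ 2 / S.α (k - 1) - S.α k ^ 2 / S.lam k
  else S.α k ^ 2 / S.α (k - 1)

/-- `P_k`, with the convention `P_0 = P_1 - α_0`. -/
def P (S : AdaBB n) (k : ℕ) : ℝ :=
  if k = 0 then S.Paux 1 - S.α 0 else S.Paux k

/-- `w_k = α_k + P_k - P_{k+1}`. -/
def w (S : AdaBB n) (k : ℕ) : ℝ := S.α k + S.P k - S.P (k + 1)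

/-- The Lyapunov function `Υ_k` (for `k ≥ 1`), relative to a minimizer `xs` of `f`. -/
def Upsilon (S : AdaBB n) (xs : EuclideanSpace ℝ (Fin n)) (k : ℕ) : ℝ :=
  ‖S.x k - xs‖ ^ 2 + 2 * S.M k * ‖S.x k - S.x (k - 1)‖ ^ 2 +
    (2 * S.α (k - 1) + 2 * S.P (k - 1)) * (S.f (S.x (k - 1)) - S.f xs)

end AdaBB

end

/-! With `d = x^k - x^{k-1} = -α_{k-1} ∇f(x^{k-1})` and `Δ = ∇f(x^k) - ∇f(x^{k-1})`, the BB
quotient gives `‖Δ‖² = ⟨Δ, d⟩ / λ_k`, and expanding `‖x^{k+1} - x^k‖² = α_k² ‖∇f(x^k)‖²` in terms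
of `Δ` and `∇f(x^{k-1})` yields the identity. For the bound, convexity controls
`⟨∇f(x^k), x^{k-1} - x^k⟩` by `f(x^{k-1}) - f(x^k)`, and the remaining term
`(α_k²/λ_k - α_k²/α_{k-1}) ⟨Δ, d⟩` is nonpositive when `λ_k ≥ α_{k-1}`; it is traded against the
inner-product term through `⟨Δ, d⟩ + ⟨∇f(x^k), -d⟩ = ‖d‖²/α_{k-1}` when `λ_k > α_{k-1}/2`, and
bounded by Cauchy–Schwarz, `⟨Δ, d⟩ ≤ ‖d‖²/λ_k`, when `λ_k ≤ α_{k-1}/2`. -/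

theorem ConvexOn.le_sub_of_hasFDerivAt {E : Type*} [NormedAddCommGroup E] [NormedSpace ℝ E]
    {f : E → ℝ} {f' : E →L[ℝ] ℝ} {x : E} (hf : ConvexOn ℝ Set.univ f)
    (hf' : HasFDerivAt f f' x) (y : E) : f' (y - x) ≤ f y - f x := by
  have hline : ConvexOn ℝ Set.univ (f ∘ AffineMap.lineMap (k := ℝ) x y) := by
    simpa using hf.comp_affineMap (AffineMap.lineMap (k := ℝ) x y)
  have hderiv : HasDerivAt (f ∘ AffineMap.lineMap (k := ℝ) x y) (f' (y - x)) 0 := by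
    have hf'0 : HasFDerivAt f f' (AffineMap.lineMap (k := ℝ) x y 0) := by simpa using hf'
    exact hf'0.comp_hasDerivAt 0 AffineMap.hasDerivAt_lineMap
  simpa [slope_def_field] using
    hline.le_slope_of_hasDerivAt (Set.mem_univ 0) (Set.mem_univ 1) one_pos hderiv

theorem ConvexOn.inner_le_sub_of_hasGradientAt {E : Type*} [NormedAddCommGroup E]
    [InnerProductSpace ℝ E] [CompleteSpace E] {f : E → ℝ} {g x : E}
    (hf : ConvexOn ℝ Set.univ f) (hg : HasGradientAt f g x) (y : E) :
    ⟪g, y - x⟫ ≤ f y - f x := by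
  simpa using hf.le_sub_of_hasFDerivAt hg.hasFDerivAt y

theorem inner_le_norm_sq_div_of_inner_eq {E : Type*} [NormedAddCommGroup E]
    [InnerProductSpace ℝ E] {u v : E} {c : ℝ} (hc : 0 < c) (h : ⟪u, v⟫ = c * ‖u‖ ^ 2) :
    ⟪u, v⟫ ≤ ‖v‖ ^ 2 / c := by
  have hcs : c * ‖u‖ ^ 2 ≤ ‖u‖ * ‖v‖ := h ▸ real_inner_le_norm u v
  have hcu : c * ‖u‖ ≤ ‖v‖ := by
    rcases (norm_nonneg u).eq_or_lt with hu | hu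
    · rw [← hu]; simp
    · nlinarith
  rw [h, le_div_iff₀ hc]
  nlinarith [mul_nonneg hc.le (norm_nonneg u)]

section BBStep

variable {E : Type*} [NormedAddCommGroup E] [InnerProductSpace ℝ E]
  {x₀ x₁ x₂ g₀ g₁ : E} {a b lam δ : ℝ}

theorem inner_sub_add_inner_eq_norm_sq_div (h₁ : x₁ = x₀ - a • g₀) (ha : a ≠ 0) :
    ⟪g₁ - g₀, x₁ - x₀⟫ + ⟪g₁, x₀ - x₁⟫ = ‖x₁ - x₀‖ ^ 2 / a := by
  subst h₁
  simp only [sub_sub_cancel_left, sub_sub_cancel, inner_neg_right, inner_smul_right,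
    inner_sub_left, norm_neg, norm_smul, mul_pow, Real.norm_eq_abs, sq_abs,
    ← real_inner_self_eq_norm_sq]
  field_simp
  ring

theorem norm_sub_sq_eq_of_bb_step (h₁ : x₁ = x₀ - a • g₀) (h₂ : x₂ = x₁ - b • g₁)
    (hlam : ⟪g₁ - g₀, x₁ - x₀⟫ = lam * ‖g₁ - g₀‖ ^ 2) (ha : a ≠ 0) (hlam0 : lam ≠ 0) :
    ‖x₂ - x₁‖ ^ 2 =
      (b ^ 2 / lam - b ^ 2 / a) * ⟪g₁ - g₀, x₁ - x₀⟫ + b ^ 2 / a * ⟪g₁, x₀ - x₁⟫ := by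
  subst h₁ h₂
  simp only [sub_sub_cancel_left, sub_sub_cancel, inner_neg_right, inner_smul_right,
    inner_sub_left, inner_sub_right, norm_neg, norm_smul, mul_pow, Real.norm_eq_abs, sq_abs,
    ← real_inner_self_eq_norm_sq, real_inner_comm g₀ g₁] at hlam ⊢
  linear_combination (norm := skip) (-b ^ 2 / lam) * hlam
  field_simp
  ring

theorem norm_sub_sq_le_of_le_lam (h₁ : x₁ = x₀ - a • g₀) (h₂ : x₂ = x₁ - b • g₁)
    (hlam : ⟪g₁ - g₀, x₁ - x₀⟫ = lam * ‖g₁ - g₀‖ ^ 2) (ha : 0 < a) (hal : a ≤ lam)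
    (hδ : ⟪g₁, x₀ - x₁⟫ ≤ δ) :
    ‖x₂ - x₁‖ ^ 2 ≤ b ^ 2 / a * δ := by
  rw [norm_sub_sq_eq_of_bb_step h₁ h₂ hlam ha.ne' (ha.trans_le hal).ne']
  have hcoef : b ^ 2 / lam - b ^ 2 / a ≤ 0 :=
    sub_nonpos.2 (div_le_div_of_nonneg_left (sq_nonneg b) ha hal)
  have hinner : 0 ≤ ⟪g₁ - g₀, x₁ - x₀⟫ := hlam ▸ by have := ha.trans_le hal; positivity
  linarith [mul_nonpos_of_nonpos_of_nonneg hcoef hinner,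
    mul_le_mul_of_nonneg_left hδ (by positivity : 0 ≤ b ^ 2 / a)]

theorem norm_sub_sq_le_of_half_le_lam (h₁ : x₁ = x₀ - a • g₀) (h₂ : x₂ = x₁ - b • g₁)
    (hlam : ⟪g₁ - g₀, x₁ - x₀⟫ = lam * ‖g₁ - g₀‖ ^ 2) (ha : 0 < a) (hal : a / 2 ≤ lam)
    (hδ : ⟪g₁, x₀ - x₁⟫ ≤ δ) :
    ‖x₂ - x₁‖ ^ 2 ≤ (b ^ 2 / (lam * a) - b ^ 2 / a ^ 2) * ‖x₁ - x₀‖ ^ 2 +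
      (2 * b ^ 2 / a - b ^ 2 / lam) * δ := by
  have hl : 0 < lam := by linarith
  have hsplit : ‖x₂ - x₁‖ ^ 2 = (b ^ 2 / (lam * a) - b ^ 2 / a ^ 2) * ‖x₁ - x₀‖ ^ 2 +
      (2 * b ^ 2 / a - b ^ 2 / lam) * ⟪g₁, x₀ - x₁⟫ := by
    rw [norm_sub_sq_eq_of_bb_step h₁ h₂ hlam ha.ne' hl.ne']
    linear_combination (norm := skip) (b ^ 2 / lam - b ^ 2 / a) *
      inner_sub_add_inner_eq_norm_sq_div (g₁ := g₁) h₁ ha.ne'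
    field_simp
    ring
  have hcoef : 0 ≤ 2 * b ^ 2 / a - b ^ 2 / lam := by
    have := div_le_div_of_nonneg_left (sq_nonneg b) (half_pos ha) hal
    rw [div_div_eq_mul_div, mul_comm] at this
    linarith
  rw [hsplit]
  linarith [mul_le_mul_of_nonneg_left hδ hcoef]

theorem norm_sub_sq_le_of_lam_le (h₁ : x₁ = x₀ - a • g₀) (h₂ : x₂ = x₁ - b • g₁)
    (hlam : ⟪g₁ - g₀, x₁ - x₀⟫ = lam * ‖g₁ - g₀‖ ^ 2) (hl : 0 < lam) (hla : lam ≤ a)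
    (hδ : ⟪g₁, x₀ - x₁⟫ ≤ δ) :
    ‖x₂ - x₁‖ ^ 2 ≤ (b ^ 2 / lam ^ 2 - b ^ 2 / (a * lam)) * ‖x₁ - x₀‖ ^ 2 +
      b ^ 2 / a * δ := by
  have ha : 0 < a := hl.trans_le hla
  rw [norm_sub_sq_eq_of_bb_step h₁ h₂ hlam ha.ne' hl.ne']
  have hcoef : 0 ≤ b ^ 2 / lam - b ^ 2 / a :=
    sub_nonneg.2 (div_le_div_of_nonneg_left (sq_nonneg b) hl hla)
  have hinner := mul_le_mul_of_nonneg_left (inner_le_norm_sq_div_of_inner_eq hl hlam) hcoef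
  have hM : (b ^ 2 / lam - b ^ 2 / a) * (‖x₁ - x₀‖ ^ 2 / lam) =
      (b ^ 2 / lam ^ 2 - b ^ 2 / (a * lam)) * ‖x₁ - x₀‖ ^ 2 := by
    ring
  linarith [mul_le_mul_of_nonneg_left hδ (by positivity : 0 ≤ b ^ 2 / a)]

end BBStep

namespace AdaBB

variable {n : ℕ} (S : AdaBB n)

theorem x_succ (k : ℕ) : S.x (k + 1) = S.x k - S.α k • S.f' (S.x k) := by
  cases k with
  | zero => exact S.hx1
  | succ k => exact S.hstep k

theorem inner_eq_lam_mul (k : ℕ) :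
    ⟪S.f' (S.x (k + 1)) - S.f' (S.x k), S.x (k + 1) - S.x k⟫ =
      S.lam (k + 1) * ‖S.f' (S.x (k + 1)) - S.f' (S.x k)‖ ^ 2 := by
  have : ‖S.f' (S.x (k + 1)) - S.f' (S.x k)‖ ≠ 0 := norm_ne_zero_iff.2 (sub_ne_zero.2 (S.hne k))
  rw [S.hlam k]
  field_simp

theorem alpha_succ_pos {k : ℕ} (hα : 0 < S.α k) (hθ : 0 ≤ S.θ k) : 0 < S.α (k + 1) := by
  have hl := S.hlampos k
  rcases le_or_gt (S.α k) (S.lam (k + 1)) with h1 | h1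
  · rw [(S.hcase1 k h1).1]
    exact mul_pos (Real.sqrt_pos.2 (by linarith)) hα
  rcases lt_or_ge (S.α k / 2) (S.lam (k + 1)) with h2 | h2
  · rcases (S.hcase2 k h2 h1).1 with h | h <;> rw [h]
    · refine mul_pos (lt_min ?_ ?_) hα <;> refine Real.sqrt_pos.2 (div_pos ?_ ?_) <;>
        nlinarith
    · exact hl
  · rcases (S.hcase3 k h2).1 with h | h <;> rw [h]
    · exact mul_pos (Real.sqrt_pos.2 (div_pos hα (by linarith))) hl
    · positivity

theorem theta_succ_nonneg {k : ℕ} (hα : 0 < S.α k) (hα' : 0 < S.α (k + 1)) :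
    0 ≤ S.θ (k + 1) := by
  rcases le_or_gt (S.α k) (S.lam (k + 1)) with h1 | h1
  · rw [(S.hcase1 k h1).2]
    positivity
  rcases lt_or_ge (S.α k / 2) (S.lam (k + 1)) with h2 | h2
  · rw [(S.hcase2 k h2 h1).2, sub_nonneg, div_le_div_iff₀ (S.hlampos k) hα]
    nlinarith
  · rw [(S.hcase3 k h2).2]
    positivity

theorem alpha_pos_and_theta_nonneg (k : ℕ) : 0 < S.α k ∧ 0 ≤ S.θ k := by
  induction k with
  | zero => exact ⟨S.hα0, S.hθ0⟩
  | succ k ih =>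
    have hα' := S.alpha_succ_pos ih.1 ih.2
    exact ⟨hα', S.theta_succ_nonneg ih.1 hα'⟩

end AdaBB

open scoped RealInnerProductSpace in
/-- Lemma 3.3: for the general AdaBB iteration and every `k ≥ 1`, the identity (i1) and
the bound (e1) on `‖x^{k+1} - x^k‖²` hold. -/
theorem adabb_displacement (n : ℕ) (S : AdaBB n) (k : ℕ) (hk : 1 ≤ k) :
    ‖S.x (k + 1) - S.x k‖ ^ 2 =
      (S.α k ^ 2 / S.lam k - S.α k ^ 2 / S.α (k - 1)) *
          ⟪S.f' (S.x k) - S.f' (S.x (k - 1)), S.x k - S.x (k - 1)⟫ +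
        S.α k ^ 2 / S.α (k - 1) * ⟪S.f' (S.x k), S.x (k - 1) - S.x k⟫ ∧
    ‖S.x (k + 1) - S.x k‖ ^ 2 ≤
      S.M k * ‖S.x k - S.x (k - 1)‖ ^ 2 + S.P k * (S.f (S.x (k - 1)) - S.f (S.x k)) := by
  obtain ⟨j, rfl⟩ := Nat.exists_eq_add_of_le' hk
  have h₁ := S.x_succ j
  have h₂ := S.x_succ (j + 1)
  have hlam := S.inner_eq_lam_mul j
  have ha := (S.alpha_pos_and_theta_nonneg j).1
  have hl := S.hlampos j
  have hδ := S.hconv.inner_le_sub_of_hasGradientAt (S.hgrad (S.x (j + 1))) (S.x j)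
  simp only [Nat.add_sub_cancel, AdaBB.M, AdaBB.P, AdaBB.Paux, Nat.succ_ne_zero, if_false]
  refine ⟨norm_sub_sq_eq_of_bb_step h₁ h₂ hlam ha.ne' hl.ne', ?_⟩
  split_ifs with hcase₁ hcase₂
  · simpa using norm_sub_sq_le_of_le_lam h₁ h₂ hlam ha hcase₁ hδ
  · exact norm_sub_sq_le_of_half_le_lam h₁ h₂ hlam ha hcase₂.le hδ
  · exact norm_sub_sq_le_of_lam_le h₁ h₂ hlam hl (not_le.1 hcase₁).le hδ
end

section
/- For the stepsizes {α_k} generated by the general AdaBB iteration: (i) if α_j ≥ 1/(√2·L) for some j ≥ 0, then α_k ≥ 1/(√2·L) for every k ≥ j; (ii) α_k ≥ c := min{α_0, 1/(√2·L)} > 0 for all k ≥ 0; (iii) consequently Σ_{i=1}^k α_i ≥ c·k for all k ≥ 1. -/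
open scoped RealInnerProductSpace
open Finset Filter

/-!
The iterates never leave `B(x*, R)`: the Lyapunov function
`Υ_k = ‖x^k - x*‖² + 2 M_k ‖x^k - x^{k-1}‖² + 2 (α_{k-1} + P_{k-1}) (f(x^{k-1}) - f_*)`
is nonincreasing and `Υ_1 ≤ R²`. Its decrease rests on `M_k ≤ 1/2`, `P_{k+1} ≤ α_k + P_k` and
the one-step inequality
`2 α_k² ‖∇f(x^k)‖² + 2 P_k f(x^k) ≤ 2 M_k α_{k-1}² ‖∇f(x^{k-1})‖² + 2 P_k f(x^{k-1})`,
which follows from convexity and the definition of `λ_k` separately in each case of the update.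
Cocoercivity on the ball then gives `λ_k ≥ 1/L`, and every update rule satisfies
`α_k ≥ min {α_{k-1}, λ_k/√2} ≥ min {α_{k-1}, 1/(√2 L)}`; the three claims follow by induction.
-/

theorem ConvexOn.inner_gradient_le_sub {E : Type*} [NormedAddCommGroup E] [InnerProductSpace ℝ E]
    [CompleteSpace E] {s : Set E} {f : E → ℝ} {g x y : E} (hf : ConvexOn ℝ s f)
    (hx : x ∈ s) (hy : y ∈ s) (hg : HasGradientAt f g x) :
    ⟪g, y - x⟫ ≤ f y - f x := by
  let φ : ℝ → ℝ := f ∘ AffineMap.lineMap x y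
  have hφ : ConvexOn ℝ (AffineMap.lineMap x y ⁻¹' s) φ := hf.comp_affineMap _
  have hderiv : HasDerivAt φ ⟪g, y - x⟫ 0 := by
    have hline : HasDerivAt (AffineMap.lineMap x y : ℝ → E) (y - x) 0 :=
      AffineMap.hasDerivAt_lineMap
    simpa using hg.hasFDerivAt.comp_hasDerivAt_of_eq 0 hline (by simp)
  have h := hφ.le_slope_of_hasDerivAt (x := 0) (y := 1) (by simpa) (by simpa) one_pos hderiv
  simpa [φ, slope_def_field] using h

theorem le_of_min_le_succ {β : Type*} [LinearOrder β] {u : ℕ → β} {c : β}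
    (h : ∀ k, min (u k) c ≤ u (k + 1)) {j k : ℕ} (hj : c ≤ u j) (hjk : j ≤ k) : c ≤ u k := by
  induction k, hjk using Nat.le_induction with
  | base => exact hj
  | succ k _ ih => exact (le_min ih le_rfl).trans (h k)

theorem min_le_of_min_le_succ {β : Type*} [LinearOrder β] {u : ℕ → β} {c : β}
    (h : ∀ k, min (u k) c ≤ u (k + 1)) (k : ℕ) : min (u 0) c ≤ u k := by
  induction k with
  | zero => exact min_le_left _ _
  | succ k ih => exact (le_min ih (min_le_right _ _)).trans (h k)

theorem sq_le_of_le_sqrt_mul {b x a : ℝ} (hb : 0 ≤ b) (hx : 0 ≤ x) (h : b ≤ √x * a) :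
    b ^ 2 ≤ x * a ^ 2 := by
  calc b ^ 2 ≤ (√x * a) ^ 2 := pow_le_pow_left₀ hb h 2
    _ = x * a ^ 2 := by rw [mul_pow, Real.sq_sqrt hx]

namespace AdaBB

/-- One update `(α_{k-1}, θ_{k-1}) ↦ (α_k, θ_k)` of the stepsize and its ratio, driven by the
BB stepsize `lam = λ_k`. -/
structure IsStep (α θ lam α' θ' : ℝ) : Prop where
  pos : 0 < α
  ratio_nonneg : 0 ≤ θ
  lam_pos : 0 < lam
  case1 : α ≤ lam → α' = √(1 + θ) * α ∧ θ' = α' / α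
  case2 : α / 2 < lam → lam < α →
    (α' = min (√(lam / (2 * (α - lam)))) (√((1 + θ) * lam / (2 * lam - α))) * α ∨ α' = lam) ∧
    θ' = 2 * α' / α - α' / lam
  case3 : lam ≤ α / 2 → (α' = √(α / (2 * (α - lam))) * lam ∨ α' = lam / √2) ∧ θ' = α' / α

/-- `M_k` as a function of `(α_{k-1}, λ_k, α_k)`. -/
noncomputable def stepM (α lam α' : ℝ) : ℝ :=
  if α ≤ lam then 0
  else if α / 2 < lam then α' ^ 2 / (lam * α) - α' ^ 2 / α ^ 2
  else α' ^ 2 / lam ^ 2 - α' ^ 2 / (α * lam)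

/-- `P_k` (for `k ≥ 1`) as a function of `(α_{k-1}, λ_k, α_k)`. -/
noncomputable def stepP (α lam α' : ℝ) : ℝ :=
  if α ≤ lam then α' ^ 2 / α
  else if α / 2 < lam then 2 * α' ^ 2 / α - α' ^ 2 / lam
  else α' ^ 2 / α

section Step

variable {α θ lam α' θ' : ℝ}

theorem stepM_stepP_cases (hα : 0 < α) (hlam : 0 < lam) :
    (α ≤ lam ∧ stepM α lam α' = 0 ∧ stepP α lam α' * α = α' ^ 2) ∨
    (α / 2 < lam ∧ lam < α ∧ stepM α lam α' * (α ^ 2 * lam) = α' ^ 2 * (α - lam) ∧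
      stepP α lam α' * (α * lam) = α' ^ 2 * (2 * lam - α)) ∨
    (lam ≤ α / 2 ∧ stepM α lam α' * (α * lam ^ 2) = α' ^ 2 * (α - lam) ∧
      stepP α lam α' * α = α' ^ 2) := by
  rcases le_or_gt α lam with h1 | h1
  · left
    rw [stepM, stepP, if_pos h1, if_pos h1]
    exact ⟨h1, rfl, by field_simp⟩
  rcases lt_or_ge (α / 2) lam with h2 | h2
  · right; left
    simp only [stepM, stepP, if_neg h1.not_ge, if_pos h2]
    exact ⟨h2, h1, by field_simp, by field_simp⟩
  · right; right
    simp only [stepM, stepP, if_neg h1.not_ge, if_neg h2.not_gt]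
    exact ⟨h2, by field_simp, by field_simp⟩

theorem stepM_nonneg (hα : 0 < α) (hlam : 0 < lam) : 0 ≤ stepM α lam α' := by
  rcases stepM_stepP_cases (α' := α') hα hlam with ⟨-, hM, -⟩ | ⟨-, h1, hM, -⟩ | ⟨h2, hM, -⟩
  · exact hM.ge
  · refine nonneg_of_mul_nonneg_left (b := α ^ 2 * lam) ?_ (by positivity)
    rw [hM]; exact mul_nonneg (sq_nonneg _) (by linarith)
  · refine nonneg_of_mul_nonneg_left (b := α * lam ^ 2) ?_ (by positivity)
    rw [hM]; exact mul_nonneg (sq_nonneg _) (by linarith)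

theorem stepP_nonneg (hα : 0 < α) (hlam : 0 < lam) : 0 ≤ stepP α lam α' := by
  rcases stepM_stepP_cases (α' := α') hα hlam with ⟨-, -, hP⟩ | ⟨h2, -, -, hP⟩ | ⟨-, -, hP⟩
  · exact nonneg_of_mul_nonneg_left (hP ▸ sq_nonneg _) hα
  · refine nonneg_of_mul_nonneg_left (b := α * lam) ?_ (by positivity)
    rw [hP]; exact mul_nonneg (sq_nonneg _) (by linarith)
  · exact nonneg_of_mul_nonneg_left (hP ▸ sq_nonneg _) hα

/-- The one-step energy inequality, with `A = ‖∇f(x^{k-1})‖²`, `V = ‖∇f(x^k)‖²`,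
`D = ‖∇f(x^k) - ∇f(x^{k-1})‖²`, `F = f(x^{k-1})` and `F' = f(x^k)`. -/
theorem energy_le {A V D F F' : ℝ} (hα : 0 < α) (hlam : 0 < lam) (hD : 0 ≤ D)
    (hV : α * V = α * A + (α - 2 * lam) * D) (hF : α * A ≤ F - F' + lam * D)
    (hCS : lam ^ 2 * D ≤ α ^ 2 * A) :
    2 * α' ^ 2 * V + 2 * stepP α lam α' * F' ≤
      2 * stepM α lam α' * α ^ 2 * A + 2 * stepP α lam α' * F := by
  rcases stepM_stepP_cases (α' := α') hα hlam with ⟨h1, hM, hP⟩ | ⟨h2, h1, hM, hP⟩ | ⟨h2, hM, hP⟩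
  · refine le_of_mul_le_mul_left (a := α) ?_ hα
    rw [hM]
    linear_combination 2 * α' ^ 2 * hF + 2 * α' ^ 2 * D * h1 - (2 * F - 2 * F') * hP +
      2 * α' ^ 2 * hV
  · refine le_of_mul_le_mul_left (a := α ^ 2 * lam) ?_ (by positivity)
    have := mul_le_mul_of_nonneg_left hF
      (mul_nonneg (by positivity) (by linarith) : (0 : ℝ) ≤ 2 * α' ^ 2 * α * (2 * lam - α))
    linear_combination this + 2 * α' ^ 2 * α * lam * hV + 2 * α * F' * hP - 2 * α * F * hP
      - 2 * α ^ 2 * A * hM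
  · refine le_of_mul_le_mul_left (a := α * lam ^ 2) ?_ (by positivity)
    have := mul_le_mul_of_nonneg_left hCS
      (mul_nonneg (by positivity) (by linarith) : (0 : ℝ) ≤ 2 * α' ^ 2 * (α - lam))
    linear_combination 2 * α' ^ 2 * lam ^ 2 * hF + this + 2 * α' ^ 2 * lam ^ 2 * hV
      + 2 * lam ^ 2 * F' * hP - 2 * lam ^ 2 * F * hP - 2 * α ^ 2 * A * hM

namespace IsStep

variable (h : IsStep α θ lam α' θ')
include h

theorem pos_next : 0 < α' := by
  have := h.pos; have := h.lam_pos; have := h.ratio_nonneg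
  rcases le_or_gt α lam with h1 | h1
  · rw [(h.case1 h1).1]; positivity
  rcases lt_or_ge (α / 2) lam with h2 | h2
  · rcases (h.case2 h2 h1).1 with h' | h' <;> rw [h']
    · have : 0 < 2 * (α - lam) := by linarith
      have : 0 < 2 * lam - α := by linarith
      positivity
    · positivity
  · have : 0 < 2 * (α - lam) := by linarith
    rcases (h.case3 h2).1 with h' | h' <;> rw [h'] <;> positivity

theorem stepP_eq : stepP α lam α' = θ' * α' := by
  have hα := h.pos; have hl := h.lam_pos
  rcases stepM_stepP_cases (α' := α') hα hl with ⟨h1, -, hP⟩ | ⟨h2, h1, -, hP⟩ | ⟨h2, -, hP⟩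
  · rw [(h.case1 h1).2]; field_simp; linear_combination hP
  · rw [(h.case2 h2 h1).2]; field_simp; linear_combination hP
  · rw [(h.case3 h2).2]; field_simp; linear_combination hP

theorem ratio_nonneg_next : 0 ≤ θ' := by
  have hP := stepP_nonneg (α' := α') h.pos h.lam_pos
  rw [h.stepP_eq] at hP
  exact nonneg_of_mul_nonneg_left hP h.pos_next

theorem stepM_le_half : stepM α lam α' ≤ 1 / 2 := by
  have hα := h.pos; have hl := h.lam_pos; have hα' := h.pos_next.le
  rcases stepM_stepP_cases (α' := α') hα hl with ⟨-, hM, -⟩ | ⟨h2, h1, hM, -⟩ | ⟨h2, hM, -⟩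
  · norm_num [hM]
  · refine le_of_mul_le_mul_right (a := α ^ 2 * lam) ?_ (by positivity)
    rw [hM]
    rcases (h.case2 h2 h1).1 with h' | h'
    · have hX : 0 ≤ lam / (2 * (α - lam)) := div_nonneg hl.le (by linarith)
      have := sq_le_of_le_sqrt_mul hα' hX (h'.trans_le (by gcongr; exact min_le_left _ _))
      rw [div_mul_eq_mul_div, le_div_iff₀ (by linarith)] at this
      nlinarith
    · rw [h']; nlinarith [sq_nonneg (α - 2 * lam)]
  · refine le_of_mul_le_mul_right (a := α * lam ^ 2) ?_ (by positivity)
    rw [hM]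
    rcases (h.case3 h2).1 with h' | h'
    · have hX : 0 ≤ α / (2 * (α - lam)) := div_nonneg hα.le (by linarith)
      have := sq_le_of_le_sqrt_mul hα' hX h'.le
      rw [div_mul_eq_mul_div, le_div_iff₀ (by linarith)] at this
      nlinarith
    · rw [h', div_pow, Real.sq_sqrt zero_le_two]; nlinarith

theorem stepP_le : stepP α lam α' ≤ (1 + θ) * α := by
  have hα := h.pos; have hl := h.lam_pos; have hθ := h.ratio_nonneg; have hα' := h.pos_next.le
  rcases stepM_stepP_cases (α' := α') hα hl with ⟨h1, -, hP⟩ | ⟨h2, h1, -, hP⟩ | ⟨h2, -, hP⟩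
  · refine le_of_mul_le_mul_right (a := α) ?_ hα
    rw [hP, (h.case1 h1).1, mul_pow, Real.sq_sqrt (by linarith)]
    nlinarith
  · refine le_of_mul_le_mul_right (a := α * lam) ?_ (by positivity)
    rw [hP]
    rcases (h.case2 h2 h1).1 with h' | h'
    · have hY : 0 ≤ (1 + θ) * lam / (2 * lam - α) := div_nonneg (by positivity) (by linarith)
      have := sq_le_of_le_sqrt_mul hα' hY (h'.trans_le (by gcongr; exact min_le_right _ _))
      rw [div_mul_eq_mul_div, le_div_iff₀ (by linarith)] at this
      nlinarith
    · rw [h']; nlinarith [sq_nonneg (α - lam), mul_nonneg hθ (mul_nonneg hα.le hl.le)]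
  · refine le_of_mul_le_mul_right (a := α) ?_ hα
    have hsq : α' ^ 2 ≤ lam ^ 2 := by
      rcases (h.case3 h2).1 with h' | h'
      · have hX : 0 ≤ α / (2 * (α - lam)) := div_nonneg hα.le (by linarith)
        have := sq_le_of_le_sqrt_mul hα' hX h'.le
        rw [div_mul_eq_mul_div, le_div_iff₀ (by linarith)] at this
        nlinarith
      · rw [h', div_pow, Real.sq_sqrt zero_le_two]; nlinarith
    rw [hP]
    nlinarith [mul_le_mul h2 h2 hl.le (by linarith), mul_nonneg hθ (sq_nonneg α)]

theorem min_le_next : min α (lam / √2) ≤ α' := by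
  have hα := h.pos; have hl := h.lam_pos; have hθ := h.ratio_nonneg
  have hlow : ∀ x, 1 / 2 ≤ x → lam / √2 ≤ √x * lam := fun x hx ↦ by
    rw [div_eq_mul_inv, mul_comm, ← Real.sqrt_inv]
    gcongr
    linarith
  rcases le_or_gt α lam with h1 | h1
  · rw [(h.case1 h1).1]
    exact (min_le_left _ _).trans (le_mul_of_one_le_left hα.le (Real.one_le_sqrt.2 (by linarith)))
  rcases lt_or_ge (α / 2) lam with h2 | h2
  · rcases (h.case2 h2 h1).1 with h' | h'
    · rw [h', min_mul_of_nonneg _ _ hα.le]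
      refine le_min ((min_le_right _ _).trans ((hlow (lam / (2 * (α - lam))) ?_).trans ?_))
        ((min_le_left _ _).trans (le_mul_of_one_le_left hα.le (Real.one_le_sqrt.2 ?_)))
      · rw [le_div_iff₀ (by linarith)]; linarith
      · gcongr
      · rw [one_le_div (by linarith)]; nlinarith
    · rw [h']
      exact (min_le_right _ _).trans (div_le_self hl.le (Real.one_le_sqrt.2 one_le_two))
  · rcases (h.case3 h2).1 with h' | h' <;> rw [h']
    · refine (min_le_right _ _).trans (hlow _ ?_)
      rw [le_div_iff₀ (by linarith)]; linarith
    · exact min_le_right _ _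

end IsStep
end Step

variable {n : ℕ} (S : AdaBB n)

theorem isStep_of_pos {k : ℕ} (hα : 0 < S.α k) (hθ : 0 ≤ S.θ k) :
    IsStep (S.α k) (S.θ k) (S.lam (k + 1)) (S.α (k + 1)) (S.θ (k + 1)) :=
  ⟨hα, hθ, S.hlampos k, S.hcase1 k, S.hcase2 k, S.hcase3 k⟩

theorem α_pos_and_θ_nonneg : ∀ k, 0 < S.α k ∧ 0 ≤ S.θ k
  | 0 => ⟨S.hα0, S.hθ0⟩
  | k + 1 =>
    have h := S.isStep_of_pos (α_pos_and_θ_nonneg k).1 (α_pos_and_θ_nonneg k).2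
    ⟨h.pos_next, h.ratio_nonneg_next⟩

theorem isStep (k : ℕ) : IsStep (S.α k) (S.θ k) (S.lam (k + 1)) (S.α (k + 1)) (S.θ (k + 1)) :=
  S.isStep_of_pos (S.α_pos_and_θ_nonneg k).1 (S.α_pos_and_θ_nonneg k).2

theorem α_pos (k : ℕ) : 0 < S.α k :=
  (S.isStep k).pos

theorem M_succ (k : ℕ) : S.M (k + 1) = stepM (S.α k) (S.lam (k + 1)) (S.α (k + 1)) :=
  rfl

theorem P_succ (k : ℕ) : S.P (k + 1) = stepP (S.α k) (S.lam (k + 1)) (S.α (k + 1)) :=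
  rfl

theorem P_zero : S.P 0 = S.P 1 - S.α 0 :=
  rfl

theorem P_succ_le_α_add_P : ∀ k, S.P (k + 1) ≤ S.α k + S.P k
  | 0 => by rw [P_zero]; linarith
  | k + 1 => calc
    S.P (k + 2) ≤ (1 + S.θ (k + 1)) * S.α (k + 1) := (S.isStep (k + 1)).stepP_le
    _ = S.α (k + 1) + S.P (k + 1) := by rw [S.P_succ, (S.isStep k).stepP_eq]; ring

theorem α_add_P_nonneg : ∀ k, 0 ≤ S.α k + S.P k
  | 0 => by
    rw [P_zero, add_sub_cancel, P_succ]
    exact stepP_nonneg (S.α_pos 0) (S.hlampos 0)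
  | k + 1 => by
    rw [P_succ]
    exact add_nonneg (S.α_pos _).le (stepP_nonneg (S.α_pos k) (S.hlampos k))

theorem x_succ_sub (k : ℕ) : S.x (k + 1) - S.x k = -(S.α k • S.f' (S.x k)) := by
  rw [x_succ, sub_sub_cancel_left]

theorem norm_x_succ_sub_sq (k : ℕ) :
    ‖S.x (k + 1) - S.x k‖ ^ 2 = S.α k ^ 2 * ‖S.f' (S.x k)‖ ^ 2 := by
  rw [x_succ_sub, norm_neg, norm_smul, Real.norm_of_nonneg (S.α_pos k).le, mul_pow]

theorem norm_f'_sub_pos (k : ℕ) : 0 < ‖S.f' (S.x (k + 1)) - S.f' (S.x k)‖ :=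
  norm_pos_iff.2 (sub_ne_zero.2 (S.hne k))

theorem inner_f'_le_sub (x y : EuclideanSpace ℝ (Fin n)) : ⟪S.f' x, y - x⟫ ≤ S.f y - S.f x :=
  S.hconv.inner_gradient_le_sub trivial trivial (S.hgrad x)

theorem norm_x_succ_sub_sq_le (z : EuclideanSpace ℝ (Fin n)) (k : ℕ) :
    ‖S.x (k + 1) - z‖ ^ 2 ≤
      ‖S.x k - z‖ ^ 2 - 2 * S.α k * (S.f (S.x k) - S.f z) + S.α k ^ 2 * ‖S.f' (S.x k)‖ ^ 2 := by
  have hconv := S.inner_f'_le_sub (S.x k) z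
  rw [← neg_sub, inner_neg_right] at hconv
  rw [x_succ, sub_right_comm, norm_sub_sq_real, real_inner_smul_right, norm_smul,
    Real.norm_of_nonneg (S.α_pos k).le, mul_pow, real_inner_comm]
  nlinarith [mul_le_mul_of_nonneg_left hconv (S.α_pos k).le]

theorem lam_mul_norm_sq (k : ℕ) :
    S.lam (k + 1) * ‖S.f' (S.x (k + 1)) - S.f' (S.x k)‖ ^ 2 =
      S.α k * (‖S.f' (S.x k)‖ ^ 2 - ⟪S.f' (S.x (k + 1)), S.f' (S.x k)⟫) := by
  rw [S.hlam k, div_mul_cancel₀ _ (pow_pos (S.norm_f'_sub_pos k) 2).ne', x_succ_sub,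
    inner_neg_right, real_inner_smul_right, inner_sub_left, real_inner_self_eq_norm_sq]
  ring

theorem α_mul_norm_sq_succ (k : ℕ) :
    S.α k * ‖S.f' (S.x (k + 1))‖ ^ 2 = S.α k * ‖S.f' (S.x k)‖ ^ 2 +
      (S.α k - 2 * S.lam (k + 1)) * ‖S.f' (S.x (k + 1)) - S.f' (S.x k)‖ ^ 2 := by
  linear_combination -S.α k * norm_sub_sq_real (S.f' (S.x (k + 1))) (S.f' (S.x k)) +
    2 * S.lam_mul_norm_sq k

theorem α_mul_norm_sq_le (k : ℕ) :
    S.α k * ‖S.f' (S.x k)‖ ^ 2 ≤ S.f (S.x k) - S.f (S.x (k + 1)) +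
      S.lam (k + 1) * ‖S.f' (S.x (k + 1)) - S.f' (S.x k)‖ ^ 2 := by
  have h := S.inner_f'_le_sub (S.x (k + 1)) (S.x k)
  rw [← neg_sub, x_succ_sub, neg_neg, real_inner_smul_right] at h
  linarith [S.lam_mul_norm_sq k]

theorem lam_sq_mul_le (k : ℕ) :
    S.lam (k + 1) ^ 2 * ‖S.f' (S.x (k + 1)) - S.f' (S.x k)‖ ^ 2 ≤
      S.α k ^ 2 * ‖S.f' (S.x k)‖ ^ 2 := by
  have hD := pow_pos (S.norm_f'_sub_pos k) 2
  have hCS := real_inner_mul_inner_self_le (S.f' (S.x (k + 1)) - S.f' (S.x k)) (S.x (k + 1) - S.x k)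
  rw [real_inner_self_eq_norm_sq, real_inner_self_eq_norm_sq, norm_x_succ_sub_sq,
    ← div_mul_cancel₀ ⟪_, _⟫ hD.ne', ← S.hlam k] at hCS
  refine le_of_mul_le_mul_left (a := ‖S.f' (S.x (k + 1)) - S.f' (S.x k)‖ ^ 2) ?_ hD
  nlinarith

theorem energy_succ_le (k : ℕ) :
    2 * S.α (k + 1) ^ 2 * ‖S.f' (S.x (k + 1))‖ ^ 2 + 2 * S.P (k + 1) * S.f (S.x (k + 1)) ≤
      2 * S.M (k + 1) * S.α k ^ 2 * ‖S.f' (S.x k)‖ ^ 2 + 2 * S.P (k + 1) * S.f (S.x k) :=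
  energy_le (S.α_pos k) (S.hlampos k) (sq_nonneg _) (S.α_mul_norm_sq_succ k)
    (S.α_mul_norm_sq_le k) (S.lam_sq_mul_le k)

theorem Upsilon_succ (z : EuclideanSpace ℝ (Fin n)) (k : ℕ) :
    S.Upsilon z (k + 1) = ‖S.x (k + 1) - z‖ ^ 2 + 2 * S.M (k + 1) * ‖S.x (k + 1) - S.x k‖ ^ 2 +
      (2 * S.α k + 2 * S.P k) * (S.f (S.x k) - S.f z) :=
  rfl

variable {S} {z : EuclideanSpace ℝ (Fin n)} (hz : ∀ y, S.f z ≤ S.f y)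
include hz

theorem Upsilon_succ_succ_le (k : ℕ) : S.Upsilon z (k + 2) ≤ S.Upsilon z (k + 1) := by
  have hdesc := S.norm_x_succ_sub_sq_le z (k + 1)
  have hM := mul_le_mul_of_nonneg_right (S.isStep (k + 1)).stepM_le_half
    (sq_nonneg (S.α (k + 1) * ‖S.f' (S.x (k + 1))‖))
  have hP := mul_le_mul_of_nonneg_right (S.P_succ_le_α_add_P k) (sub_nonneg.2 (hz (S.x k)))
  have hE := S.energy_succ_le k
  rw [← M_succ, mul_pow] at hM
  rw [Upsilon_succ, Upsilon_succ, norm_x_succ_sub_sq, norm_x_succ_sub_sq]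
  linarith

theorem Upsilon_one_le : S.Upsilon z 1 ≤ ‖S.x 0 - z‖ ^ 2 +
    S.α 0 ^ 2 * (1 + 2 * S.M 1) * ‖S.f' (S.x 0)‖ ^ 2 +
      max (2 * S.P 1 - 2 * S.α 0) 0 * (S.f (S.x 0) - S.f z) := by
  have hdesc := S.norm_x_succ_sub_sq_le z 0
  have hmax := mul_le_mul_of_nonneg_right (le_max_left (2 * S.P 1 - 2 * S.α 0) 0)
    (sub_nonneg.2 (hz (S.x 0)))
  rw [Upsilon_succ, norm_x_succ_sub_sq, P_zero]
  linarith

theorem norm_x_succ_sub_sq_le_Upsilon (k : ℕ) : ‖S.x (k + 1) - z‖ ^ 2 ≤ S.Upsilon z (k + 1) := by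
  have hM := stepM_nonneg (α' := S.α (k + 1)) (S.α_pos k) (S.hlampos k)
  have hP := mul_nonneg (S.α_add_P_nonneg k) (sub_nonneg.2 (hz (S.x k)))
  rw [Upsilon_succ, M_succ]
  nlinarith [sq_nonneg ‖S.x (k + 1) - S.x k‖]

theorem norm_x_sub_le {R : ℝ} (hR0 : 0 ≤ R)
    (hR2 : R ^ 2 = ‖S.x 0 - z‖ ^ 2 + S.α 0 ^ 2 * (1 + 2 * S.M 1) * ‖S.f' (S.x 0)‖ ^ 2 +
      max (2 * S.P 1 - 2 * S.α 0) 0 * (S.f (S.x 0) - S.f z)) (k : ℕ) :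
    ‖S.x k - z‖ ≤ R := by
  refine (pow_le_pow_iff_left₀ (norm_nonneg _) hR0 two_ne_zero).1 ?_
  rw [hR2]
  cases k with
  | zero =>
    have hM := stepM_nonneg (α' := S.α 1) (S.α_pos 0) (S.hlampos 0)
    have hmax := mul_nonneg (le_max_right (2 * S.P 1 - 2 * S.α 0) 0) (sub_nonneg.2 (hz (S.x 0)))
    rw [← M_succ] at hM
    nlinarith [sq_nonneg (S.α 0 * ‖S.f' (S.x 0)‖)]
  | succ k => calc
    ‖S.x (k + 1) - z‖ ^ 2 ≤ S.Upsilon z (k + 1) := norm_x_succ_sub_sq_le_Upsilon hz k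
    _ ≤ S.Upsilon z 1 :=
      antitone_nat_of_succ_le (f := fun k ↦ S.Upsilon z (k + 1)) (Upsilon_succ_succ_le hz) k.zero_le
    _ ≤ _ := Upsilon_one_le hz

end AdaBB

open scoped RealInnerProductSpace in
/-- Proposition 3.7: lower bounds on the AdaBB stepsizes.  (i) If `α_j ≥ 1/(√2·L)` for some
`j`, then `α_k ≥ 1/(√2·L)` for every `k ≥ j`; (ii) `α_k ≥ c := min{α_0, 1/(√2·L)} > 0` for all
`k ≥ 0`; (iii) consequently `Σ_{i=1}^k α_i ≥ c·k` for all `k ≥ 1`. -/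
theorem adabb_stepsize_lower_bounds (n : ℕ) (S : AdaBB n)
    (xs : EuclideanSpace ℝ (Fin n)) (hxs : ∀ y, S.f xs ≤ S.f y)
    (R : ℝ) (hR0 : 0 ≤ R)
    (hR2 : R ^ 2 = ‖S.x 0 - xs‖ ^ 2 + S.α 0 ^ 2 * (1 + 2 * S.M 1) * ‖S.f' (S.x 0)‖ ^ 2 +
      max (2 * S.P 1 - 2 * S.α 0) 0 * (S.f (S.x 0) - S.f xs))
    (L : ℝ) (hL : 0 < L)
    (hcoco : ∀ x y : EuclideanSpace ℝ (Fin n), ‖x - xs‖ ≤ R → ‖y - xs‖ ≤ R →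
      (1 / L) * ‖S.f' x - S.f' y‖ ^ 2 ≤ ⟪S.f' x - S.f' y, x - y⟫) :
    (∀ j, 1 / (Real.sqrt 2 * L) ≤ S.α j → ∀ k, j ≤ k → 1 / (Real.sqrt 2 * L) ≤ S.α k) ∧
    (0 < min (S.α 0) (1 / (Real.sqrt 2 * L)) ∧
      ∀ k, min (S.α 0) (1 / (Real.sqrt 2 * L)) ≤ S.α k) ∧
    (∀ k : ℕ, 1 ≤ k →
      min (S.α 0) (1 / (Real.sqrt 2 * L)) * (k : ℝ) ≤ ∑ i ∈ Finset.Icc 1 k, S.α i) := by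
  have hball := AdaBB.norm_x_sub_le hxs hR0 hR2
  have hstep (k : ℕ) : min (S.α k) (1 / (√2 * L)) ≤ S.α (k + 1) := by
    have hlam : 1 / L ≤ S.lam (k + 1) := by
      rw [S.hlam k, le_div_iff₀ (pow_pos (S.norm_f'_sub_pos k) 2)]
      exact hcoco _ _ (hball _) (hball _)
    refine le_trans ?_ (S.isStep k).min_le_next
    rw [mul_comm, ← div_div]
    gcongr
  have hlow := min_le_of_min_le_succ hstep
  refine ⟨fun j hj k hjk ↦ le_of_min_le_succ hstep hj hjk, ⟨lt_min S.hα0 (by positivity), hlow⟩,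
    fun k _ ↦ ?_⟩
  simpa [mul_comm] using Finset.card_nsmul_le_sum (Finset.Icc 1 k) S.α _ (fun i _ ↦ hlow i)
end
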